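/- arXiv:2205.04033 — 4 statements merged into one kernel-verified Lean document; each statement's English description precedes it below -/
import Mathlib

section
/- Let n ∈ ℕ, β ∈ (0,1], and 0 < m̲ ≤ m̄ be real constants. Let F : ℝⁿ → ℝⁿ be continuously differentiable and let M : ℝⁿ → (n×n real symmetric matrices) be continuous and uniformly bounded, i.e. m̲‖v‖² ≤ vᵀ M(x) v ≤ m̄‖v‖² for all x, v ∈ ℝⁿ. Assume the discrete-time contraction condition: for every x, v ∈ ℝⁿ, (DF(x) v)ᵀ M(F(x)) (DF(x) v) ≤ (1−β) · vᵀ M(x) v, where DF(x) is the Fréchet derivative of F at x. Then the iterated closed-loop map is exponentially incrementally stable: for all x₀, x₀* ∈ ℝⁿ and all k ∈ ℕ, ‖F^[k](x₀) − F^[k](x₀*)‖ ≤ √(m̄/m̲) · (1−β)^{k/2} · ‖x₀ − x₀*‖. -/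
/-!
Write `Q x v = vᵀ M(x) v` for the energy of a tangent vector `v` at `x`. By the chain rule the
derivative of `F^[k]` is a product of `k` derivatives of `F`, each of which multiplies the energy by
at most `1 - β`; hence `Q (F^[k] x) (D F^[k](x) v) ≤ (1 - β)^k Q x v`. The uniform bounds on `M`
turn this into the operator-norm bound `‖D F^[k](x)‖ ≤ √(m̄/m̲) (1 - β)^{k/2}`, and the mean value
inequality on the convex space `ℝⁿ` turns that into the incremental estimate.
-/

open Matrix

theorem ContinuousLinearMap.opNorm_le_sqrt_of_sq_le {𝕜 E G : Type*} [NontriviallyNormedField 𝕜]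
    [NormedAddCommGroup E] [NormedSpace 𝕜 E] [NormedAddCommGroup G] [NormedSpace 𝕜 G]
    (L : E →L[𝕜] G) {K : ℝ} (h : ∀ v, ‖L v‖ ^ 2 ≤ K * ‖v‖ ^ 2) : ‖L‖ ≤ √K := by
  refine L.opNorm_le_bound (Real.sqrt_nonneg K) fun v ↦ ?_
  calc ‖L v‖ = √(‖L v‖ ^ 2) := (Real.sqrt_sq (norm_nonneg _)).symm
    _ ≤ √(K * ‖v‖ ^ 2) := Real.sqrt_le_sqrt (h v)
    _ = √K * ‖v‖ := by rw [Real.sqrt_mul' K (sq_nonneg _), Real.sqrt_sq (norm_nonneg v)]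

theorem Real.sqrt_pow {x : ℝ} (hx : 0 ≤ x) (k : ℕ) : √(x ^ k) = √x ^ k := by
  rw [Real.sqrt_eq_iff_eq_sq (pow_nonneg hx k) (pow_nonneg (Real.sqrt_nonneg x) k), ← pow_mul,
    mul_comm, pow_mul, Real.sq_sqrt hx]

section ContractionMetric

variable {𝕜 E : Type*} [NontriviallyNormedField 𝕜] [NormedAddCommGroup E] [NormedSpace 𝕜 E]
  {f : E → E} {Q : E → E → ℝ} {c mlo mhi : ℝ}

theorem metric_fderiv_iterate_le (hf : Differentiable 𝕜 f) (hc : 0 ≤ c)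
    (hcontr : ∀ x v, Q (f x) (fderiv 𝕜 f x v) ≤ c * Q x v) (k : ℕ) (x v : E) :
    Q (f^[k] x) (fderiv 𝕜 f^[k] x v) ≤ c ^ k * Q x v := by
  induction k generalizing x v with
  | zero => simp
  | succ k ih =>
    have hchain : fderiv 𝕜 f^[k + 1] x = (fderiv 𝕜 f (f^[k] x)).comp (fderiv 𝕜 f^[k] x) := by
      rw [Function.iterate_succ']
      exact fderiv_comp x (hf _) (hf.iterate k x)
    rw [hchain, Function.iterate_succ_apply', ContinuousLinearMap.comp_apply, pow_succ',
      mul_assoc]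
    exact (hcontr _ _).trans (mul_le_mul_of_nonneg_left (ih x v) hc)

theorem norm_fderiv_iterate_le (hf : Differentiable 𝕜 f) (hc : 0 ≤ c) (hmlo : 0 < mlo)
    (hlo : ∀ x v, mlo * ‖v‖ ^ 2 ≤ Q x v) (hhi : ∀ x v, Q x v ≤ mhi * ‖v‖ ^ 2)
    (hcontr : ∀ x v, Q (f x) (fderiv 𝕜 f x v) ≤ c * Q x v) (k : ℕ) (x : E) :
    ‖fderiv 𝕜 f^[k] x‖ ≤ √(mhi / mlo) * √c ^ k := by
  rw [← Real.sqrt_pow hc, ← Real.sqrt_mul' _ (pow_nonneg hc k)]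
  refine ContinuousLinearMap.opNorm_le_sqrt_of_sq_le _ fun v ↦ ?_
  have hdecay : mlo * ‖fderiv 𝕜 f^[k] x v‖ ^ 2 ≤ c ^ k * (mhi * ‖v‖ ^ 2) :=
    calc mlo * ‖fderiv 𝕜 f^[k] x v‖ ^ 2 ≤ Q (f^[k] x) (fderiv 𝕜 f^[k] x v) := hlo _ _
      _ ≤ c ^ k * Q x v := metric_fderiv_iterate_le hf hc hcontr k x v
      _ ≤ c ^ k * (mhi * ‖v‖ ^ 2) := mul_le_mul_of_nonneg_left (hhi x v) (pow_nonneg hc k)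
  rw [div_mul_eq_mul_div, div_mul_eq_mul_div, le_div_iff₀ hmlo]
  linarith

theorem norm_iterate_sub_le [IsRCLikeNormedField 𝕜] [NormedSpace ℝ E] (hf : Differentiable 𝕜 f) (hc : 0 ≤ c) (hmlo : 0 < mlo)
    (hlo : ∀ x v, mlo * ‖v‖ ^ 2 ≤ Q x v) (hhi : ∀ x v, Q x v ≤ mhi * ‖v‖ ^ 2)
    (hcontr : ∀ x v, Q (f x) (fderiv 𝕜 f x v) ≤ c * Q x v) (k : ℕ) (x y : E) :
    ‖f^[k] x - f^[k] y‖ ≤ √(mhi / mlo) * √c ^ k * ‖x - y‖ :=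
  convex_univ.norm_image_sub_le_of_norm_fderiv_le (fun z _ ↦ hf.iterate k z)
    (fun z _ ↦ norm_fderiv_iterate_le hf hc hmlo hlo hhi hcontr k z) trivial trivial

end ContractionMetric

theorem contraction_implies_exponential_incremental_stability_general
    (n : ℕ) (β : ℝ) (hβ1 : β ≤ 1)
    (mlo mhi : ℝ) (hmlo : 0 < mlo)
    (F : EuclideanSpace ℝ (Fin n) → EuclideanSpace ℝ (Fin n))
    (hF : ContDiff ℝ 1 F)
    (M : EuclideanSpace ℝ (Fin n) → Matrix (Fin n) (Fin n) ℝ)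
    (hMlo : ∀ x v : EuclideanSpace ℝ (Fin n), mlo * ‖v‖ ^ 2 ≤ v ⬝ᵥ (M x).mulVec v)
    (hMhi : ∀ x v : EuclideanSpace ℝ (Fin n), v ⬝ᵥ (M x).mulVec v ≤ mhi * ‖v‖ ^ 2)
    (hcontr : ∀ x v : EuclideanSpace ℝ (Fin n),
      (fderiv ℝ F x v) ⬝ᵥ (M (F x)).mulVec (fderiv ℝ F x v)
        ≤ (1 - β) * (v ⬝ᵥ (M x).mulVec v)) :
    ∀ (x₀ y₀ : EuclideanSpace ℝ (Fin n)) (k : ℕ),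
      ‖F^[k] x₀ - F^[k] y₀‖
        ≤ Real.sqrt (mhi / mlo) * (1 - β) ^ ((k : ℝ) / 2) * ‖x₀ - y₀‖ := by
  intro x₀ y₀ k
  have hrate : (0 : ℝ) ≤ 1 - β := by linarith
  rw [Real.rpow_div_two_eq_sqrt _ hrate, Real.rpow_natCast]
  exact norm_iterate_sub_le (hF.differentiable one_ne_zero) hrate hmlo hMlo hMhi hcontr k x₀ y₀

/-- **Theorem 1** (exponential incremental stability under a discrete-time contraction
metric). If the closed-loop map `F` satisfies the pointwise differential contraction
condition with respect to a uniformly bounded symmetric metric `M` and rate `β ∈ (0,1]`,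
then iterates of `F` are exponentially incrementally stable. -/
theorem contraction_implies_exponential_incremental_stability
    (n : ℕ) (β : ℝ) (hβ0 : 0 < β) (hβ1 : β ≤ 1)
    (mlo mhi : ℝ) (hmlo : 0 < mlo) (hmm : mlo ≤ mhi)
    (F : EuclideanSpace ℝ (Fin n) → EuclideanSpace ℝ (Fin n))
    (hF : ContDiff ℝ 1 F)
    (M : EuclideanSpace ℝ (Fin n) → Matrix (Fin n) (Fin n) ℝ)
    (hMsymm : ∀ x, (M x).IsSymm)
    (hMcont : Continuous M)
    (hMlo : ∀ x v : EuclideanSpace ℝ (Fin n), mlo * ‖v‖ ^ 2 ≤ v ⬝ᵥ (M x).mulVec v)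
    (hMhi : ∀ x v : EuclideanSpace ℝ (Fin n), v ⬝ᵥ (M x).mulVec v ≤ mhi * ‖v‖ ^ 2)
    (hcontr : ∀ x v : EuclideanSpace ℝ (Fin n),
      (fderiv ℝ F x v) ⬝ᵥ (M (F x)).mulVec (fderiv ℝ F x v)
        ≤ (1 - β) * (v ⬝ᵥ (M x).mulVec v)) :
    ∀ (x₀ y₀ : EuclideanSpace ℝ (Fin n)) (k : ℕ),
      ‖F^[k] x₀ - F^[k] y₀‖
        ≤ Real.sqrt (mhi / mlo) * (1 - β) ^ ((k : ℝ) / 2) * ‖x₀ - y₀‖ :=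
  contraction_implies_exponential_incremental_stability_general n β hβ1 mlo mhi hmlo F hF M hMlo
    hMhi hcontr
end

section
/- Let n, m ∈ ℕ and β ∈ (0,1]. Let M and M₊ be n×n real positive definite matrices, A an n×n real matrix, B an n×m real matrix, and K an m×n real matrix. Set W = M⁻¹, W₊ = M₊⁻¹, and L = K·W. Then the 2×2 block matrix [[W₊, A·W + B·L], [(A·W + B·L)ᵀ, (1−β)·W]] is positive definite if and only if (1−β)·M − (A + B·K)ᵀ · M₊ · (A + B·K) is positive definite. -/
/-!
Since `W₊ ≻ 0`, the block LMI is positive definite iff its Schur complement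
`(1 - β) W - (F W)ᵀ W₊⁻¹ (F W)` is, where `F = A + B K`. With `W₊⁻¹ = M₊` and `W = M⁻¹` this
complement is `W ((1 - β) M - Fᵀ M₊ F) W`, and congruence by the invertible `W` preserves
positive definiteness.
-/

open Matrix

namespace Matrix

variable {m n : Type*} [Fintype m] [Fintype n]

theorem posDef_fromBlocks_zero_iff {R : Type*} [Ring R] [PartialOrder R] [StarRing R]
    [StarOrderedRing R] {A : Matrix m m R} {D : Matrix n n R} :
    (fromBlocks A 0 0 D).PosDef ↔ A.PosDef ∧ D.PosDef := by
  refine ⟨fun h => ⟨h.submatrix Sum.inl_injective, h.submatrix Sum.inr_injective⟩,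
    fun ⟨hA, hD⟩ => ?_⟩
  refine .of_dotProduct_mulVec_pos (hA.1.fromBlocks (by simp) hD.1) fun x hx => ?_
  obtain ⟨u, v, rfl⟩ : ∃ u v, x = Sum.elim u v :=
    ⟨x ∘ Sum.inl, x ∘ Sum.inr, (Sum.elim_comp_inl_inr x).symm⟩
  have hq : star (Sum.elim u v) ⬝ᵥ (fromBlocks A 0 0 D *ᵥ Sum.elim u v) =
      star u ⬝ᵥ (A *ᵥ u) + star v ⬝ᵥ (D *ᵥ v) := by
    simp [fromBlocks_mulVec, dotProduct_block]; rfl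
  rw [hq]
  rcases eq_or_ne u 0 with rfl | hu
  · have hv : v ≠ 0 := by rintro rfl; simp at hx
    simpa using hD.dotProduct_mulVec_pos hv
  · exact add_pos_of_pos_of_nonneg (hA.dotProduct_mulVec_pos hu)
      (hD.posSemidef.dotProduct_mulVec_nonneg v)

theorem posDef_fromBlocks₁₁_iff {K : Type*} [Field K] [PartialOrder K] [StarRing K]
    [StarOrderedRing K] [DecidableEq m] [DecidableEq n] {A : Matrix m m K} (B : Matrix m n K)
    (D : Matrix n n K) (hA : A.PosDef) :
    (fromBlocks A B Bᴴ D).PosDef ↔ (D - Bᴴ * A⁻¹ * B).PosDef := by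
  let _ := hA.isUnit.invertible
  set P : Matrix (m ⊕ n) (m ⊕ n) K := fromBlocks 1 (A⁻¹ * B) 0 1
  have hP : IsUnit P := by simp [P, isUnit_iff_isUnit_det]
  have hLDU : fromBlocks A B Bᴴ D = star P * fromBlocks A 0 0 (D - Bᴴ * A⁻¹ * B) * P := by
    rw [fromBlocks_eq_of_invertible₁₁]
    simp [P, star_eq_conjTranspose, fromBlocks_conjTranspose, conjTranspose_mul, hA.1.inv.eq]
  rw [hLDU, hP.posDef_star_left_conjugate_iff, posDef_fromBlocks_zero_iff]
  exact and_iff_right hA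

end Matrix

theorem synthesis_LMI_iff_contraction_general
    (n m : ℕ) (β : ℝ)
    (M Mp : Matrix (Fin n) (Fin n) ℝ) (hM : M.PosDef) (hMp : Mp.PosDef)
    (A : Matrix (Fin n) (Fin n) ℝ) (B : Matrix (Fin n) (Fin m) ℝ)
    (K : Matrix (Fin m) (Fin n) ℝ)
    (W Wp : Matrix (Fin n) (Fin n) ℝ) (L : Matrix (Fin m) (Fin n) ℝ)
    (hW : W = M⁻¹) (hWp : Wp = Mp⁻¹) (hL : L = K * W) :
    (Matrix.fromBlocks Wp (A * W + B * L) (A * W + B * L)ᵀ ((1 - β) • W)).PosDef ↔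
      ((1 - β) • M - (A + B * K)ᵀ * Mp * (A + B * K)).PosDef := by
  subst hW hWp hL
  set F := A + B * K
  have hWF : A * M⁻¹ + B * (K * M⁻¹) = F * M⁻¹ := by rw [Matrix.add_mul, Matrix.mul_assoc]
  have hSchur : (1 - β) • M⁻¹ - (F * M⁻¹)ᴴ * Mp⁻¹⁻¹ * (F * M⁻¹) =
      star M⁻¹ * ((1 - β) • M - Fᵀ * Mp * F) * M⁻¹ := by
    have hMdet : IsUnit M.det := isUnit_iff_isUnit_det _ |>.mp hM.isUnit
    rw [nonsing_inv_nonsing_inv _ (isUnit_iff_isUnit_det _ |>.mp hMp.isUnit), conjTranspose_mul,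
      star_eq_conjTranspose, hM.1.inv.eq, conjTranspose_eq_transpose_of_trivial, Matrix.mul_sub,
      Matrix.sub_mul, Matrix.mul_smul, Matrix.smul_mul, nonsing_inv_mul _ hMdet, Matrix.one_mul]
    simp only [Matrix.mul_assoc]
  rw [hWF, ← conjTranspose_eq_transpose_of_trivial, posDef_fromBlocks₁₁_iff _ _ hMp.inv, hSchur,
    (isUnit_nonsing_inv_iff.mpr hM.isUnit).posDef_star_left_conjugate_iff]

/-- **Corollary 1** (tractable synthesis condition): with `W = M⁻¹`, `W₊ = M₊⁻¹` and
`L = K W`, the block LMI (15)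
`[[W₊, A W + B L],[(A W + B L)ᵀ, (1−β) W]] ≻ 0`
holds iff the contraction condition (16)
`(1−β) M − (A + B K)ᵀ M₊ (A + B K) ≻ 0` holds. -/
theorem synthesis_LMI_iff_contraction
    (n m : ℕ) (β : ℝ) (hβ0 : 0 < β) (hβ1 : β ≤ 1)
    (M Mp : Matrix (Fin n) (Fin n) ℝ) (hM : M.PosDef) (hMp : Mp.PosDef)
    (A : Matrix (Fin n) (Fin n) ℝ) (B : Matrix (Fin n) (Fin m) ℝ)
    (K : Matrix (Fin m) (Fin n) ℝ)
    (W Wp : Matrix (Fin n) (Fin n) ℝ) (L : Matrix (Fin m) (Fin n) ℝ)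
    (hW : W = M⁻¹) (hWp : Wp = Mp⁻¹) (hL : L = K * W) :
    (Matrix.fromBlocks Wp (A * W + B * L) (A * W + B * L)ᵀ ((1 - β) • W)).PosDef ↔
      ((1 - β) • M - (A + B * K)ᵀ * Mp * (A + B * K)).PosDef :=
  synthesis_LMI_iff_contraction_general n m β M Mp hM hMp A B K W Wp L hW hWp hL
end

section
/- Let n, p ∈ ℕ, β ∈ (0,1], α > 0, and T ∈ ℕ. For each k ∈ ℕ let A(k) be an n×n real matrix, B(k) an n×p real matrix, and M(k) an n×n real positive semidefinite symmetric matrix, and suppose the dissipation matrix inequality holds for each k ≤ T: [A(k) B(k)]ᵀ · M(k+1) · [A(k) B(k)] ≼ fromBlocks((1−β)·M(k) − I, 0; 0, α²·I), where [A(k) B(k)] is the n×(n+p) matrix with column blocks A(k) and B(k) and ≼ denotes the positive-semidefinite (Loewner) order. Let δ : ℕ → ℝⁿ and w : ℕ → ℝᵖ satisfy δ(k+1) = A(k)·δ(k) + B(k)·w(k). Then the truncated ℓ₂ gain bound holds: Σ_{k=0}^{T} ‖δ(k)‖² ≤ δ(0)ᵀ·M(0)·δ(0) + α² · Σ_{k=0}^{T}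 ‖w(k)‖². -/
open Matrix

/-
The storage `V k = δ(k)ᵀ M(k) δ(k)` decreases along the dynamics up to the supply rate:
testing the dissipation inequality at step `k` on the stacked vector `(δ(k), w(k))` gives
`V(k+1) + ‖δ(k)‖² ≤ (1 - β) V(k) + α² ‖w(k)‖² ≤ V(k) + α² ‖w(k)‖²`.
Summing telescopes the storage terms, and `V(T+1) ≥ 0` can be dropped.
-/

theorem EuclideanSpace.real_norm_sq_eq_dotProduct {ι : Type*} [Fintype ι]
    (x : EuclideanSpace ℝ ι) : ‖x‖ ^ 2 = x ⬝ᵥ x := by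
  rw [EuclideanSpace.real_norm_sq_eq]
  simp only [dotProduct, sq]

namespace Matrix

variable {l m n R : Type*} [Fintype l] [Fintype m] [Fintype n]

theorem dotProduct_transpose_mul_mul_mulVec [CommSemiring R]
    (F : Matrix m n R) (M : Matrix m m R) (z : n → R) :
    z ⬝ᵥ (Fᵀ * M * F) *ᵥ z = (F *ᵥ z) ⬝ᵥ M *ᵥ (F *ᵥ z) := by
  rw [← mulVec_mulVec, dotProduct_mulVec, ← vecMul_vecMul, vecMul_transpose,
    ← dotProduct_mulVec]

theorem sumElim_dotProduct_fromBlocks_diagonal_mulVec [CommSemiring R]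
    (P : Matrix m m R) (Q : Matrix n n R) (x : m → R) (u : n → R) :
    Sum.elim x u ⬝ᵥ fromBlocks P 0 0 Q *ᵥ Sum.elim x u = x ⬝ᵥ P *ᵥ x + u ⬝ᵥ Q *ᵥ u := by
  rw [fromBlocks_mulVec, sumElim_dotProduct_sumElim]
  simp only [zero_mulVec, add_zero, zero_add, Sum.elim_comp_inl, Sum.elim_comp_inr]

theorem dotProduct_mulVec_le_of_posSemidef_fromBlocks_sub
    {P : Matrix m m ℝ} {Q : Matrix n n ℝ} {M : Matrix l l ℝ}
    {A : Matrix l m ℝ} {B : Matrix l n ℝ}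
    (h : (fromBlocks P 0 0 Q - (fromCols A B)ᵀ * M * fromCols A B).PosSemidef)
    (x : m → ℝ) (u : n → ℝ) :
    (A *ᵥ x + B *ᵥ u) ⬝ᵥ M *ᵥ (A *ᵥ x + B *ᵥ u) ≤ x ⬝ᵥ P *ᵥ x + u ⬝ᵥ Q *ᵥ u := by
  have hz := h.dotProduct_mulVec_nonneg (Sum.elim x u)
  rw [star_trivial, sub_mulVec, dotProduct_sub, dotProduct_transpose_mul_mul_mulVec,
    fromCols_mulVec_sumElim, sumElim_dotProduct_fromBlocks_diagonal_mulVec] at hz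
  linarith

end Matrix

theorem Finset.sum_range_le_add_of_le_sub_succ {V s r : ℕ → ℝ} {N : ℕ}
    (hV : 0 ≤ V N) (hstep : ∀ k < N, s k ≤ r k + (V k - V (k + 1))) :
    ∑ k ∈ range N, s k ≤ V 0 + ∑ k ∈ range N, r k := by
  calc ∑ k ∈ range N, s k
      ≤ ∑ k ∈ range N, (r k + (V k - V (k + 1))) :=
        sum_le_sum fun k hk => hstep k (mem_range.mp hk)
    _ = ∑ k ∈ range N, r k + (V 0 - V N) := by rw [sum_add_distrib, sum_range_sub']
    _ ≤ V 0 + ∑ k ∈ range N, r k := by linarith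

theorem truncated_l2_gain_bound_general
    (n p : ℕ) (β : ℝ) (hβ0 : 0 < β) (α : ℝ) (T : ℕ)
    (A : ℕ → Matrix (Fin n) (Fin n) ℝ)
    (B : ℕ → Matrix (Fin n) (Fin p) ℝ)
    (M : ℕ → Matrix (Fin n) (Fin n) ℝ)
    (hMpsd : ∀ k, (M k).PosSemidef)
    (hdiss : ∀ k ≤ T,
      (Matrix.fromBlocks ((1 - β) • M k - 1) 0 0 (α ^ 2 • (1 : Matrix (Fin p) (Fin p) ℝ))
        - (Matrix.fromCols (A k) (B k))ᵀ * M (k + 1) *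
            Matrix.fromCols (A k) (B k)).PosSemidef)
    (δ : ℕ → EuclideanSpace ℝ (Fin n))
    (w : ℕ → EuclideanSpace ℝ (Fin p))
    (hdyn : ∀ k, δ (k + 1)
      = (EuclideanSpace.equiv (Fin n) ℝ).symm ((A k).mulVec (δ k) + (B k).mulVec (w k))) :
    ∑ k ∈ Finset.range (T + 1), ‖δ k‖ ^ 2
      ≤ (δ 0) ⬝ᵥ (M 0).mulVec (δ 0) + α ^ 2 * ∑ k ∈ Finset.range (T + 1), ‖w k‖ ^ 2 := by
  set V : ℕ → ℝ := fun k => δ k ⬝ᵥ M k *ᵥ δ k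
  have hV_nonneg (k : ℕ) : 0 ≤ V k := (hMpsd k).dotProduct_mulVec_nonneg (δ k)
  have hstep (k : ℕ) (hk : k < T + 1) :
      ‖δ k‖ ^ 2 ≤ α ^ 2 * ‖w k‖ ^ 2 + (V k - V (k + 1)) := by
    have hδ : (δ (k + 1) : Fin n → ℝ) = A k *ᵥ δ k + B k *ᵥ w k := by rw [hdyn k]; rfl
    have h := dotProduct_mulVec_le_of_posSemidef_fromBlocks_sub (hdiss k (by omega)) (δ k) (w k)
    simp only [← hδ, sub_mulVec, smul_mulVec, one_mulVec, dotProduct_sub, dotProduct_smul,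
      smul_eq_mul, ← EuclideanSpace.real_norm_sq_eq_dotProduct] at h
    linarith [mul_nonneg hβ0.le (hV_nonneg k)]
  rw [Finset.mul_sum]
  exact Finset.sum_range_le_add_of_le_sub_succ (hV_nonneg (T + 1)) hstep

/-- **Proposition 2** (bounded incremental truncated ℓ₂ gain): if the closed-loop
differential dynamics `δ(k+1) = A(k) δ(k) + B(k) w(k)` satisfy, for each `k ≤ T`, the
dissipation matrix inequality
`[A(k) B(k)]ᵀ M(k+1) [A(k) B(k)] ≼ blkdiag((1−β) M(k) − I, α² I)`,
with `M(k)` positive semidefinite symmetric, then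
`Σ_{k=0}^{T} ‖δ(k)‖² ≤ δ(0)ᵀ M(0) δ(0) + α² Σ_{k=0}^{T} ‖w(k)‖²`. -/
theorem truncated_l2_gain_bound
    (n p : ℕ) (β : ℝ) (hβ0 : 0 < β) (hβ1 : β ≤ 1) (α : ℝ) (hα : 0 < α) (T : ℕ)
    (A : ℕ → Matrix (Fin n) (Fin n) ℝ)
    (B : ℕ → Matrix (Fin n) (Fin p) ℝ)
    (M : ℕ → Matrix (Fin n) (Fin n) ℝ)
    (hMsymm : ∀ k, (M k).IsSymm)
    (hMpsd : ∀ k, (M k).PosSemidef)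
    (hdiss : ∀ k ≤ T,
      (Matrix.fromBlocks ((1 - β) • M k - 1) 0 0 (α ^ 2 • (1 : Matrix (Fin p) (Fin p) ℝ))
        - (Matrix.fromCols (A k) (B k))ᵀ * M (k + 1) *
            Matrix.fromCols (A k) (B k)).PosSemidef)
    (δ : ℕ → EuclideanSpace ℝ (Fin n))
    (w : ℕ → EuclideanSpace ℝ (Fin p))
    (hdyn : ∀ k, δ (k + 1)
      = (EuclideanSpace.equiv (Fin n) ℝ).symm ((A k).mulVec (δ k) + (B k).mulVec (w k))) :
    ∑ k ∈ Finset.range (T + 1), ‖δ k‖ ^ 2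
      ≤ (δ 0) ⬝ᵥ (M 0).mulVec (δ 0) + α ^ 2 * ∑ k ∈ Finset.range (T + 1), ‖w k‖ ^ 2 :=
  truncated_l2_gain_bound_general n p β hβ0 α T A B M hMpsd hdiss δ w hdyn
end

section
/- Let n ∈ ℕ, β ∈ (0,1], and 0 < m̲ ≤ m̄ be real constants. Let (F_k)_{k ∈ ℕ} be a sequence of continuously differentiable maps F_k : ℝⁿ → ℝⁿ and let M : ℝⁿ → (n×n real symmetric matrices) be continuous and uniformly bounded, i.e. m̲‖v‖² ≤ vᵀ M(x) v ≤ m̄‖v‖² for all x, v ∈ ℝⁿ. Assume that for every k ∈ ℕ and every x, v ∈ ℝⁿ, (DF_k(x) v)ᵀ · M(F_k(x)) · (DF_k(x) v) ≤ (1−β) · vᵀ · M(x) · v. Let x, x* : ℕ → ℝⁿ be two trajectories of the time-varying system, i.e. x(k+1) = F_k(x(k)) and x*(k+1) = F_k(x*(k)) for all k. Then for all k ∈ ℕ: ‖x(k) − x*(k)‖ ≤ √(m̄/m̲) · (1−β)^{k/2} · ‖x(0) − x*(0)‖. -/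
/-!
Join the two initial states by the segment `γ₀` and push it forward along the flow,
`γ_{k+1} = F_k ∘ γ_k`, so that `γ_k` joins `xs k` to `x k`. By the chain rule the velocity of
`γ_{k+1}` is `DF_k` applied to the velocity of `γ_k`, so the contraction condition shrinks the
`M`-speed of the curves by the factor `1 - β` at every step. The bounds on `M` turn this into the
uniform Euclidean speed bound `√(m̄/m̲) (1-β)^{k/2} ‖x 0 - xs 0‖` for `γ_k`, and the mean value
inequality bounds the distance between the endpoints of `γ_k` by its speed.
-/

section PushedSegment

variable {E : Type*} [NormedAddCommGroup E] [NormedSpace ℝ E]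

noncomputable def pushedSegment (F : ℕ → E → E) (a b : E) : ℕ → ℝ → E
  | 0 => fun t => b + t • (a - b)
  | k + 1 => F k ∘ pushedSegment F a b k

variable {F : ℕ → E → E} {a b : E}

theorem pushedSegment_apply_zero {xs : ℕ → E} (hxs : ∀ k, xs (k + 1) = F k (xs k)) (k : ℕ) :
    pushedSegment F a (xs 0) k 0 = xs k := by
  induction k with
  | zero => simp [pushedSegment]
  | succ k ih => simp [pushedSegment, ih, hxs]

theorem pushedSegment_apply_one {x : ℕ → E} (hx : ∀ k, x (k + 1) = F k (x k)) (k : ℕ) :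
    pushedSegment F (x 0) b k 1 = x k := by
  induction k with
  | zero => simp [pushedSegment]
  | succ k ih => simp [pushedSegment, ih, hx]

theorem differentiable_pushedSegment (hF : ∀ k, Differentiable ℝ (F k)) (k : ℕ) :
    Differentiable ℝ (pushedSegment F a b k) := by
  induction k with
  | zero => exact (differentiable_id.smul_const _).const_add _
  | succ k ih => exact (hF k).comp ih

theorem deriv_pushedSegment_zero (t : ℝ) : deriv (pushedSegment F a b 0) t = a - b := by
  have h : HasDerivAt (pushedSegment F a b 0) ((1 : ℝ) • (a - b)) t :=
    ((hasDerivAt_id t).smul_const (a - b)).const_add b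
  rw [h.deriv, one_smul]

theorem deriv_pushedSegment_succ (hF : ∀ k, Differentiable ℝ (F k)) (k : ℕ) (t : ℝ) :
    deriv (pushedSegment F a b (k + 1)) t =
      fderiv ℝ (F k) (pushedSegment F a b k t) (deriv (pushedSegment F a b k) t) :=
  fderiv_comp_deriv t (hF k _) (differentiable_pushedSegment hF k t)

theorem metric_deriv_pushedSegment_le {g : E → E → ℝ} {c : ℝ} (hc : 0 ≤ c)
    (hF : ∀ k, Differentiable ℝ (F k))
    (hcontr : ∀ k x v, g (F k x) (fderiv ℝ (F k) x v) ≤ c * g x v) (k : ℕ) (t : ℝ) :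
    g (pushedSegment F a b k t) (deriv (pushedSegment F a b k) t) ≤
      c ^ k * g (pushedSegment F a b 0 t) (a - b) := by
  induction k with
  | zero => simp [deriv_pushedSegment_zero]
  | succ k ih =>
    rw [deriv_pushedSegment_succ hF]
    calc _ ≤ c * g (pushedSegment F a b k t) (deriv (pushedSegment F a b k) t) := hcontr k _ _
      _ ≤ c * (c ^ k * g (pushedSegment F a b 0 t) (a - b)) := by gcongr
      _ = _ := by ring

theorem norm_deriv_pushedSegment_le {g : E → E → ℝ} {c mlo mhi : ℝ} (hc : 0 ≤ c)
    (hmlo : 0 < mlo) (hlo : ∀ x v, mlo * ‖v‖ ^ 2 ≤ g x v) (hhi : ∀ x v, g x v ≤ mhi * ‖v‖ ^ 2)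
    (hF : ∀ k, Differentiable ℝ (F k))
    (hcontr : ∀ k x v, g (F k x) (fderiv ℝ (F k) x v) ≤ c * g x v) (k : ℕ) (t : ℝ) :
    ‖deriv (pushedSegment F a b k) t‖ ≤ √(mhi / mlo) * c ^ ((k : ℝ) / 2) * ‖a - b‖ := by
  set d := deriv (pushedSegment F a b k) t
  have hsq : ‖d‖ ^ 2 ≤ mhi / mlo * (c ^ k * ‖a - b‖ ^ 2) := by
    rw [div_mul_eq_mul_div, le_div_iff₀' hmlo]
    calc mlo * ‖d‖ ^ 2 ≤ g (pushedSegment F a b k t) d := hlo _ _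
      _ ≤ c ^ k * g (pushedSegment F a b 0 t) (a - b) :=
        metric_deriv_pushedSegment_le hc hF hcontr k t
      _ ≤ c ^ k * (mhi * ‖a - b‖ ^ 2) := by gcongr; exact hhi _ _
      _ = mhi * (c ^ k * ‖a - b‖ ^ 2) := by ring
  calc ‖d‖ = √(‖d‖ ^ 2) := (Real.sqrt_sq (norm_nonneg d)).symm
    _ ≤ √(mhi / mlo * (c ^ k * ‖a - b‖ ^ 2)) := Real.sqrt_le_sqrt hsq
    _ = √(mhi / mlo) * c ^ ((k : ℝ) / 2) * ‖a - b‖ := by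
      have hpow : √(c ^ k) = c ^ ((k : ℝ) / 2) := by
        rw [Real.sqrt_eq_rpow, ← Real.rpow_natCast, ← Real.rpow_mul hc, mul_one_div]
      rw [Real.sqrt_mul' _ (by positivity), Real.sqrt_mul (by positivity),
        Real.sqrt_sq (norm_nonneg _), hpow, mul_assoc]

theorem norm_sub_le_of_contracting_metric {g : E → E → ℝ} {c mlo mhi : ℝ} (hc : 0 ≤ c)
    (hmlo : 0 < mlo) (hlo : ∀ x v, mlo * ‖v‖ ^ 2 ≤ g x v) (hhi : ∀ x v, g x v ≤ mhi * ‖v‖ ^ 2)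
    (hF : ∀ k, Differentiable ℝ (F k))
    (hcontr : ∀ k x v, g (F k x) (fderiv ℝ (F k) x v) ≤ c * g x v)
    {x xs : ℕ → E} (hx : ∀ k, x (k + 1) = F k (x k)) (hxs : ∀ k, xs (k + 1) = F k (xs k))
    (k : ℕ) : ‖x k - xs k‖ ≤ √(mhi / mlo) * c ^ ((k : ℝ) / 2) * ‖x 0 - xs 0‖ := by
  rw [← pushedSegment_apply_one (b := xs 0) hx k, ← pushedSegment_apply_zero (a := x 0) hxs k]
  exact norm_image_sub_le_of_norm_deriv_le_segment_01'
    (fun t _ => (differentiable_pushedSegment hF k t).hasDerivAt.hasDerivWithinAt)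
    (fun t _ => norm_deriv_pushedSegment_le hc hmlo hlo hhi hF hcontr k t)

end PushedSegment

theorem timeVarying_contraction_exponential_incremental_stability_general
    (n : ℕ) (β : ℝ) (hβ1 : β ≤ 1)
    (mlo mhi : ℝ) (hmlo : 0 < mlo)
    (F : ℕ → EuclideanSpace ℝ (Fin n) → EuclideanSpace ℝ (Fin n))
    (hF : ∀ k, ContDiff ℝ 1 (F k))
    (M : EuclideanSpace ℝ (Fin n) → Matrix (Fin n) (Fin n) ℝ)
    (hMlo : ∀ x v : EuclideanSpace ℝ (Fin n), mlo * ‖v‖ ^ 2 ≤ v ⬝ᵥ (M x).mulVec v)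
    (hMhi : ∀ x v : EuclideanSpace ℝ (Fin n), v ⬝ᵥ (M x).mulVec v ≤ mhi * ‖v‖ ^ 2)
    (hcontr : ∀ (k : ℕ) (x v : EuclideanSpace ℝ (Fin n)),
      (fderiv ℝ (F k) x v) ⬝ᵥ (M (F k x)).mulVec (fderiv ℝ (F k) x v)
        ≤ (1 - β) * (v ⬝ᵥ (M x).mulVec v))
    (x xs : ℕ → EuclideanSpace ℝ (Fin n))
    (hx : ∀ k, x (k + 1) = F k (x k))
    (hxs : ∀ k, xs (k + 1) = F k (xs k)) :
    ∀ k : ℕ, ‖x k - xs k‖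
      ≤ Real.sqrt (mhi / mlo) * (1 - β) ^ ((k : ℝ) / 2) * ‖x 0 - xs 0‖ :=
  norm_sub_le_of_contracting_metric
    (g := fun x (v : EuclideanSpace ℝ (Fin n)) => v ⬝ᵥ (M x).mulVec v) (sub_nonneg.2 hβ1)
    hmlo hMlo hMhi (fun k => (hF k).differentiable one_ne_zero) hcontr hx hxs

/-- Convergence claim of Proposition 1 / Corollary 1 under exact disturbance
measurement: for the time-varying closed-loop maps `F_k` satisfying the pointwise
differential contraction condition with respect to a uniformly bounded symmetric
metric `M`, any two trajectories `x(k+1) = F_k(x(k))`, `x*(k+1) = F_k(x*(k))`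
converge to each other exponentially:
`‖x(k) − x*(k)‖ ≤ √(m̄/m̲) (1−β)^{k/2} ‖x(0) − x*(0)‖`. -/
theorem timeVarying_contraction_exponential_incremental_stability
    (n : ℕ) (β : ℝ) (hβ0 : 0 < β) (hβ1 : β ≤ 1)
    (mlo mhi : ℝ) (hmlo : 0 < mlo) (hmm : mlo ≤ mhi)
    (F : ℕ → EuclideanSpace ℝ (Fin n) → EuclideanSpace ℝ (Fin n))
    (hF : ∀ k, ContDiff ℝ 1 (F k))
    (M : EuclideanSpace ℝ (Fin n) → Matrix (Fin n) (Fin n) ℝ)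
    (hMsymm : ∀ x, (M x).IsSymm)
    (hMcont : Continuous M)
    (hMlo : ∀ x v : EuclideanSpace ℝ (Fin n), mlo * ‖v‖ ^ 2 ≤ v ⬝ᵥ (M x).mulVec v)
    (hMhi : ∀ x v : EuclideanSpace ℝ (Fin n), v ⬝ᵥ (M x).mulVec v ≤ mhi * ‖v‖ ^ 2)
    (hcontr : ∀ (k : ℕ) (x v : EuclideanSpace ℝ (Fin n)),
      (fderiv ℝ (F k) x v) ⬝ᵥ (M (F k x)).mulVec (fderiv ℝ (F k) x v)
        ≤ (1 - β) * (v ⬝ᵥ (M x).mulVec v))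
    (x xs : ℕ → EuclideanSpace ℝ (Fin n))
    (hx : ∀ k, x (k + 1) = F k (x k))
    (hxs : ∀ k, xs (k + 1) = F k (xs k)) :
    ∀ k : ℕ, ‖x k - xs k‖
      ≤ Real.sqrt (mhi / mlo) * (1 - β) ^ ((k : ℝ) / 2) * ‖x 0 - xs 0‖ :=
  timeVarying_contraction_exponential_incremental_stability_general n β hβ1 mlo mhi hmlo F hF M hMlo
    hMhi hcontr x xs hx hxs
end
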